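/- (Proposition 2.1, independence almost everywhere.) Let U ⊆ ℂ^m be a connected open set, k + l = m, let X_1, …, X_k : U → ℂ^m be holomorphic vector fields and f_1, …, f_l : U → ℂ holomorphic functions, and set H_i = h_{X_i} (1 ≤ i ≤ k) and H_{k+j} = f_j ∘ π (1 ≤ j ≤ l) on U × ℂ^m. Suppose there exists a point x₀ ∈ U at which X_1(x₀), …, X_k(x₀) are linearly independent and df_1(x₀), …, df_l(x₀) are linearly independent. Then the set of points (z,p) ∈ U × ℂ^m at which the differentials dH_1(z,p), …, dH_m(z,p) are linearly independent is open and dense in U × ℂ^m. -/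

import Mathlib

open Matrix Set

noncomputable section

/-- Partial derivative in the `z_i` direction of a function on `U × ℂ^m` (phase space). -/
def pderivZ {m : ℕ} (i : Fin m) (F : (Fin m → ℂ) × (Fin m → ℂ) → ℂ)
    (q : (Fin m → ℂ) × (Fin m → ℂ)) : ℂ :=
  fderiv ℂ F q (Pi.single i 1, 0)

/-- Partial derivative in the `p_i` direction of a function on `U × ℂ^m` (phase space). -/
def pderivP {m : ℕ} (i : Fin m) (F : (Fin m → ℂ) × (Fin m → ℂ) → ℂ)
    (q : (Fin m → ℂ) × (Fin m → ℂ)) : ℂ :=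
  fderiv ℂ F q (0, Pi.single i 1)

/-- Canonical Poisson bracket `{F,G} = Σᵢ (∂F/∂zᵢ ∂G/∂pᵢ − ∂F/∂pᵢ ∂G/∂zᵢ)`. -/
def poisson {m : ℕ} (F G : (Fin m → ℂ) × (Fin m → ℂ) → ℂ)
    (q : (Fin m → ℂ) × (Fin m → ℂ)) : ℂ :=
  ∑ i, (pderivZ i F q * pderivP i G q - pderivP i F q * pderivZ i G q)

/-- Hamiltonian vector field `X_H = (∂H/∂p, −∂H/∂z)`. -/
def hamVF {m : ℕ} (H : (Fin m → ℂ) × (Fin m → ℂ) → ℂ)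
    (q : (Fin m → ℂ) × (Fin m → ℂ)) : (Fin m → ℂ) × (Fin m → ℂ) :=
  (fun i => pderivP i H q, fun i => - pderivZ i H q)

/-- Jacobian matrix `(DX(z))_{ij} = ∂X_i/∂z_j`. -/
def jacM {m : ℕ} (X : (Fin m → ℂ) → (Fin m → ℂ)) (z : Fin m → ℂ) :
    Matrix (Fin m) (Fin m) ℂ :=
  Matrix.of fun i j => fderiv ℂ X z (Pi.single j 1) i

/-- Fiberwise-linear function `h_X(z,p) = Σⱼ pⱼ Xⱼ(z)` associated to a vector field `X`. -/
def fibLin {m : ℕ} (X : (Fin m → ℂ) → (Fin m → ℂ))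
    (q : (Fin m → ℂ) × (Fin m → ℂ)) : ℂ :=
  ∑ j, q.2 j * X q.1 j

/-- Cotangent lift of a vector field: `X̂(z,p) = (X(z), −(DX(z))ᵀ p)`. -/
def cotLiftVF {m : ℕ} (X : (Fin m → ℂ) → (Fin m → ℂ))
    (q : (Fin m → ℂ) × (Fin m → ℂ)) : (Fin m → ℂ) × (Fin m → ℂ) :=
  (X q.1, fun i => - ((jacM X q.1)ᵀ.mulVec q.2 i))

/-- Lie bracket of vector fields: `[X,Y](z) = DY(z)·X(z) − DX(z)·Y(z)`. -/
def lieBr {m : ℕ} (X Y : (Fin m → ℂ) → (Fin m → ℂ)) (z : Fin m → ℂ) : Fin m → ℂ :=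
  fderiv ℂ Y z (X z) - fderiv ℂ X z (Y z)

/-- Lie bracket of vector fields on phase space `ℂ^m × ℂ^m`. -/
def lieBr2 {m : ℕ} (V W : (Fin m → ℂ) × (Fin m → ℂ) → (Fin m → ℂ) × (Fin m → ℂ))
    (q : (Fin m → ℂ) × (Fin m → ℂ)) : (Fin m → ℂ) × (Fin m → ℂ) :=
  fderiv ℂ W q (V q) - fderiv ℂ V q (W q)

/-- Cotangent lift of a map: `Φ̂(z,p) = (Φ(z), ((DΦ(z))ᵀ)⁻¹ p)`. -/
def cotLiftMap {m : ℕ} (Φ : (Fin m → ℂ) → (Fin m → ℂ))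
    (q : (Fin m → ℂ) × (Fin m → ℂ)) : (Fin m → ℂ) × (Fin m → ℂ) :=
  (Φ q.1, ((jacM Φ q.1)ᵀ)⁻¹.mulVec q.2)

/-- The standard basis of `ℂ^m × ℂ^m` indexed by `Fin m ⊕ Fin m`. -/
def basis2 {m : ℕ} : Fin m ⊕ Fin m → (Fin m → ℂ) × (Fin m → ℂ)
  | Sum.inl j => (Pi.single j 1, 0)
  | Sum.inr j => (0, Pi.single j 1)

/-- Components of a vector in `ℂ^m × ℂ^m` indexed by `Fin m ⊕ Fin m`. -/
def comp2 {m : ℕ} (v : (Fin m → ℂ) × (Fin m → ℂ)) : Fin m ⊕ Fin m → ℂ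
  | Sum.inl i => v.1 i
  | Sum.inr i => v.2 i

/-- Total Jacobian matrix (in block coordinates `(z,p)`) of a self-map of phase space. -/
def jac2 {m : ℕ} (G : (Fin m → ℂ) × (Fin m → ℂ) → (Fin m → ℂ) × (Fin m → ℂ))
    (q : (Fin m → ℂ) × (Fin m → ℂ)) : Matrix (Fin m ⊕ Fin m) (Fin m ⊕ Fin m) ℂ :=
  Matrix.of fun a b => comp2 (fderiv ℂ G q (basis2 b)) a

/-- The standard symplectic matrix `J = [[0, I], [−I, 0]]` in `m×m` blocks. -/
def sympJ (m : ℕ) : Matrix (Fin m ⊕ Fin m) (Fin m ⊕ Fin m) ℂ :=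
  Matrix.fromBlocks 0 1 (-1) 0

end

/-!
A holomorphic map is locally bounded, so the Schwarz lemma bounds its Taylor remainder
quadratically, uniformly near each point. Hence the difference quotients in a direction `e`
converge locally uniformly to `z ↦ df(z) e`, which is therefore continuous and holomorphic along
every complex line. This makes independence of `dH_1, …, dH_m` an open condition. At `(x₀, 0)`
the differentials are `(u, p) ↦ p ⬝ᵥ X_i(x₀)` and `(u, p) ↦ df_j(x₀) u`, which are independent,
so some minor `g(q) = det (dH_a(q) w_b)` is nonzero there. Along each complex line `g` is a
holomorphic function of one variable, so by the identity theorem, spread through the connected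
set `U × ℂ^m` by convexity of balls, the zero set of `g` has empty interior, and independence
holds wherever `g ≠ 0`.
-/

open Metric Filter Topology

section

variable {E F : Type*} [NormedAddCommGroup E] [NormedSpace ℂ E]
  [NormedAddCommGroup F] [NormedSpace ℂ F]

theorem norm_sub_sub_fderiv_le_of_norm_le {f : E → F} {c z : E} {R M : ℝ}
    (hf : DifferentiableOn ℂ f (ball c R)) (hM : ∀ w ∈ ball c R, ‖f w‖ ≤ M)
    (hz : z ∈ ball c R) :
    ‖f z - f c - fderiv ℂ f c (z - c)‖ ≤ 4 * M * (dist z c / R) ^ 2 := by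
  have hR : 0 < R := nonempty_ball.mp ⟨z, hz⟩
  have hc : c ∈ ball c R := mem_ball_self hR
  have hmaps : MapsTo f (ball c R) (closedBall (f c) (2 * M)) := fun w hw => by
    rw [mem_closedBall, dist_eq_norm]
    linarith [norm_sub_le (f w) (f c), hM w hw, hM c hc]
  have hderiv : ‖fderiv ℂ f c‖ ≤ 2 * M / R :=
    Complex.norm_fderiv_le_div_of_mapsTo_ball hf hmaps hR
  set g : E → F := fun w => f w - fderiv ℂ f c (w - c) with hg_def
  have hg_sub (w : E) : g w - g c = f w - f c - fderiv ℂ f c (w - c) := by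
    simp only [hg_def, sub_self, map_zero, sub_zero]; abel
  have hg : DifferentiableOn ℂ g (ball c R) := hf.sub (by fun_prop)
  have hgmaps : MapsTo g (ball c R) (closedBall (g c) (4 * M)) := fun w hw => by
    have hwc : ‖w - c‖ ≤ R := by rw [← dist_eq_norm]; exact (mem_ball.mp hw).le
    have hlin : ‖fderiv ℂ f c (w - c)‖ ≤ 2 * M := calc
      _ ≤ ‖fderiv ℂ f c‖ * ‖w - c‖ := (fderiv ℂ f c).le_opNorm _
      _ ≤ 2 * M / R * R := by gcongr; exact (norm_nonneg _).trans hderiv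
      _ = 2 * M := by field_simp
    rw [mem_closedBall, dist_eq_norm, hg_sub]
    linarith [norm_sub_le (f w - f c) (fderiv ℂ f c (w - c)), norm_sub_le (f w) (f c),
      hM w hw, hM c hc]
  have hlittle : (g · - g c) =o[𝓝 c] (fun w => ‖w - c‖ ^ 1) := by
    simpa only [hg_sub, pow_one] using
      (hf.differentiableAt (isOpen_ball.mem_nhds hc)).hasFDerivAt.isLittleO.norm_right
  simpa only [dist_eq_norm, hg_sub] using
    Complex.dist_le_mul_div_pow_of_mapsTo_ball_of_isLittleO hg hgmaps hlittle hz

theorem tendstoUniformlyOn_slope_fderiv {f : E → F} {c : E} {R M : ℝ}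
    (hf : DifferentiableOn ℂ f (ball c R)) (hM : ∀ w ∈ ball c R, ‖f w‖ ≤ M) (e : E) :
    TendstoUniformlyOn (fun (s : ℂ) z => s⁻¹ • (f (z + s • e) - f z))
      (fun z => fderiv ℂ f z e) (𝓝[≠] 0) (ball c (R / 2)) := by
  obtain hR | hR := le_or_gt R 0
  · rw [ball_eq_empty.mpr (by linarith)]
    exact tendstoUniformlyOn_empty
  set K := 16 * M * ‖e‖ ^ 2 / R ^ 2
  have hbound : ∀ s : ℂ, s ≠ 0 → ‖s‖ * ‖e‖ < R / 2 → ∀ z ∈ ball c (R / 2),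
      dist (fderiv ℂ f z e) (s⁻¹ • (f (z + s • e) - f z)) ≤ K * ‖s‖ := by
    intro s hs hse z hz
    have hsub : ball z (R / 2) ⊆ ball c R :=
      ball_subset_ball' (by linarith [mem_ball.mp hz])
    have hmem : z + s • e ∈ ball z (R / 2) := by
      rwa [mem_ball, dist_eq_norm, add_sub_cancel_left, norm_smul]
    have htaylor := norm_sub_sub_fderiv_le_of_norm_le (hf.mono hsub)
      (fun w hw => hM w (hsub hw)) hmem
    rw [dist_eq_norm, add_sub_cancel_left, norm_smul] at htaylor
    have hs' : 0 < ‖s‖ := norm_pos_iff.mpr hs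
    calc dist (fderiv ℂ f z e) (s⁻¹ • (f (z + s • e) - f z))
        = ‖s‖⁻¹ * ‖f (z + s • e) - f z - fderiv ℂ f z (s • e)‖ := by
          rw [dist_comm, dist_eq_norm, ← norm_inv, ← norm_smul, map_smul,
            smul_sub _ (f _ - f _), inv_smul_smul₀ hs]
      _ ≤ ‖s‖⁻¹ * (4 * M * (‖s‖ * ‖e‖ / (R / 2)) ^ 2) := by gcongr
      _ = K * ‖s‖ := by simp only [K]; field_simp; ring
  rw [Metric.tendstoUniformlyOn_iff]
  intro ε hε
  have hR : ∀ᶠ s in 𝓝 (0 : ℂ), ‖s‖ * ‖e‖ < R / 2 :=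
    (Continuous.tendsto' (by fun_prop) 0 0 (by simp)).eventually (gt_mem_nhds (half_pos hR))
  have hK : ∀ᶠ s in 𝓝 (0 : ℂ), K * ‖s‖ < ε :=
    (Continuous.tendsto' (by fun_prop) 0 0 (by simp)).eventually (gt_mem_nhds hε)
  filter_upwards [self_mem_nhdsWithin, nhdsWithin_le_nhds hR, nhdsWithin_le_nhds hK]
    with s hs hsR hsK z hz
  exact (hbound s hs hsR z hz).trans_lt hsK

theorem exists_ball_tendstoUniformlyOn_slope_fderiv {f : E → F} {V : Set E} (hV : IsOpen V)
    (hf : DifferentiableOn ℂ f V) {z₀ : E} (hz₀ : z₀ ∈ V) (e : E) :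
    ∃ r > 0, TendstoUniformlyOn (fun (s : ℂ) z => s⁻¹ • (f (z + s • e) - f z))
        (fun z => fderiv ℂ f z e) (𝓝[≠] 0) (ball z₀ r) ∧
      ∀ᶠ s in 𝓝[≠] (0 : ℂ),
        DifferentiableOn ℂ (fun z => s⁻¹ • (f (z + s • e) - f z)) (ball z₀ r) := by
  have hbdd : ∀ᶠ w in 𝓝 z₀, w ∈ V ∧ ‖f w‖ < ‖f z₀‖ + 1 :=
    Filter.Eventually.and (hV.mem_nhds hz₀) <|
      (hf.continuousOn.continuousAt (hV.mem_nhds hz₀)).norm.eventually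
        (gt_mem_nhds (lt_add_one _))
  obtain ⟨R, hR, hRV⟩ := Metric.eventually_nhds_iff_ball.mp hbdd
  refine ⟨R / 2, half_pos hR, tendstoUniformlyOn_slope_fderiv
    (hf.mono fun w hw => (hRV w hw).1) (fun w hw => (hRV w hw).2.le) e, ?_⟩
  have hsmall : ∀ᶠ s in 𝓝 (0 : ℂ), ‖s • e‖ < R / 2 :=
    (Continuous.tendsto' (by fun_prop) 0 0 (by simp)).eventually (gt_mem_nhds (half_pos hR))
  filter_upwards [nhdsWithin_le_nhds hsmall] with s hs
  have hball : ball z₀ (R / 2) ⊆ V := fun z hz =>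
    (hRV z (ball_subset_ball (by linarith) hz)).1
  have hshift : MapsTo (· + s • e) (ball z₀ (R / 2)) V := fun z hz => by
    refine (hRV _ ?_).1
    rw [mem_ball] at hz ⊢
    calc dist (z + s • e) z₀ ≤ ‖s • e‖ + dist z z₀ := by
          simpa using dist_triangle (z + s • e) z z₀
      _ < R / 2 + R / 2 := add_lt_add hs hz
      _ = R := by ring
  exact ((hf.comp (by fun_prop) hshift).sub (hf.mono hball)).const_smul _

theorem DifferentiableOn.continuousOn_fderiv_apply {f : E → F} {V : Set E}
    (hf : DifferentiableOn ℂ f V) (hV : IsOpen V) (e : E) :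
    ContinuousOn (fun z => fderiv ℂ f z e) V := by
  intro z₀ hz₀
  obtain ⟨r, hr, hunif, hdiff⟩ := exists_ball_tendstoUniformlyOn_slope_fderiv hV hf hz₀ e
  have hcont := hunif.continuousOn (hdiff.mono fun _ h => h.continuousOn).frequently
  exact (hcont.continuousAt (ball_mem_nhds z₀ hr)).continuousWithinAt

def DifferentiableOnLines (g : E → F) (s : Set E) : Prop :=
  ∀ a v : E, DifferentiableOn ℂ (fun t : ℂ => g (a + t • v)) {t | a + t • v ∈ s}

theorem DifferentiableOn.differentiableOnLines_fderiv_apply [CompleteSpace F] {f : E → F}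
    {V : Set E} (hf : DifferentiableOn ℂ f V) (hV : IsOpen V) (e : E) :
    DifferentiableOnLines (fun z => fderiv ℂ f z e) V := by
  intro a v t₀ ht₀
  obtain ⟨r, hr, hunif, hdiff⟩ := exists_ball_tendstoUniformlyOn_slope_fderiv hV hf ht₀ e
  set D := (fun t : ℂ => a + t • v) ⁻¹' ball (a + t₀ • v) r
  have hD : IsOpen D := isOpen_ball.preimage (by fun_prop)
  have hlim : DifferentiableOn ℂ (fun t : ℂ => fderiv ℂ f (a + t • v) e) D :=
    (hunif.comp _).tendstoLocallyUniformlyOn.differentiableOn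
      (hdiff.mono fun _ h => h.comp (by fun_prop) (mapsTo_preimage _ _)) hD
  exact (hlim.differentiableAt (hD.mem_nhds (mem_ball_self hr))).differentiableWithinAt

theorem DifferentiableOnLines.mono {g : E → F} {s t : Set E} (hg : DifferentiableOnLines g s)
    (hts : t ⊆ s) : DifferentiableOnLines g t :=
  fun a v => (hg a v).mono fun _ ht => hts ht

theorem DifferentiableOnLines.det {ι : Type*} [Fintype ι] [DecidableEq ι]
    {M : E → Matrix ι ι ℂ} {s : Set E}
    (hM : ∀ i j, DifferentiableOnLines (fun x => M x i j) s) :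
    DifferentiableOnLines (fun x => (M x).det) s := by
  intro a v
  simp only [Matrix.det_apply']
  exact DifferentiableOn.fun_sum fun σ _ =>
    (DifferentiableOn.fun_finsetProd fun i _ => hM _ _ a v).const_mul _

variable [CompleteSpace F]

theorem DifferentiableOnLines.eqOn_zero_of_convex {g : E → F} {s : Set E}
    (hg : DifferentiableOnLines g s) (hs : IsOpen s) (hconv : Convex ℝ s) {a : E} (ha : a ∈ s)
    (h0 : g =ᶠ[𝓝 a] 0) : EqOn g 0 s := by
  intro w hw
  set T := {t : ℂ | a + t • (w - a) ∈ s}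
  have hT : IsOpen T := hs.preimage (by fun_prop)
  have hT_conv : Convex ℝ T := fun x hx y hy α β hα hβ hαβ => by
    show a + (α • x + β • y) • (w - a) ∈ s
    convert hconv hx hy hα hβ hαβ using 1
    rw [Complex.real_smul, Complex.real_smul]
    linear_combination (norm := module) -hαβ • a
  have h0T : (fun t : ℂ => g (a + t • (w - a))) =ᶠ[𝓝 0] 0 :=
    (Continuous.tendsto' (by fun_prop) 0 a (by simp)).eventually h0
  simpa using ((hg a (w - a)).analyticOnNhd hT).eqOn_zero_of_preconnected_of_eventuallyEq_zero
    hT_conv.isPreconnected (by simpa [T] using ha) h0T (show (1 : ℂ) ∈ T by simpa [T] using hw)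

theorem DifferentiableOnLines.eqOn_zero_of_isPreconnected {g : E → F} {s : Set E}
    (hg : DifferentiableOnLines g s) (hs : IsOpen s) (hpre : IsPreconnected s) {a : E}
    (ha : a ∈ s) (h0 : g =ᶠ[𝓝 a] 0) : EqOn g 0 s := by
  have hsA : s ⊆ {x | g =ᶠ[𝓝 x] 0} := by
    refine hpre.subset_of_closure_inter_subset isOpen_setOfPred_eventually_nhds ⟨a, ha, h0⟩ ?_
    rintro x ⟨hxA, hxs⟩
    obtain ⟨r, hr, hrs⟩ := Metric.isOpen_iff.mp hs x hxs
    obtain ⟨b, hb, hbA⟩ := mem_closure_iff_nhds.mp hxA _ (ball_mem_nhds x hr)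
    exact eventually_of_mem (ball_mem_nhds x hr)
      ((hg.mono hrs).eqOn_zero_of_convex isOpen_ball (convex_ball x r) hb hbA)
  exact fun x hx => (hsA hx).self_of_nhds

theorem DifferentiableOnLines.subset_closure_inter_ne_zero {g : E → F} {s : Set E}
    (hg : DifferentiableOnLines g s) (hs : IsOpen s) (hpre : IsPreconnected s) {a : E}
    (ha : a ∈ s) (hga : g a ≠ 0) : s ⊆ closure (s ∩ {x | g x ≠ 0}) := by
  intro x hx
  by_contra hcl
  have hx0 : g =ᶠ[𝓝 x] 0 := by
    filter_upwards [isClosed_closure.isOpen_compl.mem_nhds hcl, hs.mem_nhds hx] with y hy hys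
    by_contra hgy
    exact hy (subset_closure ⟨hys, hgy⟩)
  exact hga (hg.eqOn_zero_of_isPreconnected hs hpre hx hx0 ha)

end

section

variable {𝕜 E F : Type*} [NontriviallyNormedField 𝕜] [NormedAddCommGroup E]
  [NormedSpace 𝕜 E] [NormedAddCommGroup F] [NormedSpace 𝕜 F]

theorem LinearIndependent.sumElim_comp_snd_comp_fst {ι κ : Type*} {φ : ι → F →L[𝕜] 𝕜}
    {ψ : κ → E →L[𝕜] 𝕜} (hφ : LinearIndependent 𝕜 φ) (hψ : LinearIndependent 𝕜 ψ) :
    LinearIndependent 𝕜 (Sum.elim (fun i => (φ i).comp (ContinuousLinearMap.snd 𝕜 E F))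
      (fun j => (ψ j).comp (ContinuousLinearMap.fst 𝕜 E F))) := by
  let e := (LinearEquiv.prodComm 𝕜 (F →L[𝕜] 𝕜) (E →L[𝕜] 𝕜)).trans
    (ContinuousLinearMap.coprodEquiv (R := 𝕜) (S := 𝕜))
  have hfam : Sum.elim (fun i => (φ i).comp (ContinuousLinearMap.snd 𝕜 E F))
      (fun j => (ψ j).comp (ContinuousLinearMap.fst 𝕜 E F)) =
      e ∘ Sum.elim (LinearMap.inl 𝕜 _ _ ∘ φ) (LinearMap.inr 𝕜 _ _ ∘ ψ) := by
    ext (i | j) <;> simp [e]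
  rw [hfam]
  exact (linearIndependent_inl_union_inr' hφ hψ).map' e.toLinearMap e.ker

variable {ι : Type*} [Fintype ι] [DecidableEq ι] {φ : ι → E →L[𝕜] 𝕜}

theorem LinearIndependent.exists_det_apply_ne_zero (hφ : LinearIndependent 𝕜 φ) :
    ∃ w : ι → E, (Matrix.of fun a b => φ a (w b)).det ≠ 0 := by
  let L : E →ₗ[𝕜] ι → 𝕜 := LinearMap.pi fun a => (φ a : E →ₗ[𝕜] 𝕜)
  have hcoe : LinearIndependent 𝕜 fun a => ⇑(φ a) :=
    hφ.map' (LinearMap.ltoFun 𝕜 E 𝕜 𝕜 ∘ₗ ContinuousLinearMap.coeLM 𝕜) <| by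
      rw [LinearMap.ker_eq_bot]
      exact fun ψ₁ ψ₂ h => ContinuousLinearMap.coe_injective (LinearMap.ext (congrFun h))
  have hL : LinearMap.range L = ⊤ := by
    rw [← span_flip_eq_top_iff_linearIndependent.mpr hcoe,
      ← Submodule.span_eq (LinearMap.range L), LinearMap.coe_range]
    rfl
  choose w hw using fun b => LinearMap.range_eq_top.mp hL (Pi.single b 1)
  refine ⟨w, ?_⟩
  have hunit : (Matrix.of fun a b => φ a (w b)) = 1 := by
    ext a b
    simpa [L, Matrix.one_apply, Pi.single_apply, eq_comm] using congrFun (hw b) a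
  simp [hunit]

theorem linearIndependent_of_det_apply_ne_zero (w : ι → E)
    (hw : (Matrix.of fun a b => φ a (w b)).det ≠ 0) : LinearIndependent 𝕜 φ :=
  LinearIndependent.of_comp
    (LinearMap.pi fun b => (ContinuousLinearMap.apply 𝕜 𝕜 (w b)).toLinearMap)
    (Matrix.linearIndependent_rows_of_det_ne_zero hw)

end

section

variable {E F : Type*} [NormedAddCommGroup E] [NormedSpace ℂ E] [NormedAddCommGroup F]
  [NormedSpace ℂ F] {ι : Type*} {Ω : Set E}

theorem isOpen_inter_setOf_linearIndependent_fderiv [FiniteDimensional ℂ E] [Finite ι]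
    {H : ι → E → F} (hΩ : IsOpen Ω) (hH : ∀ a, DifferentiableOn ℂ (H a) Ω) :
    IsOpen (Ω ∩ {q | LinearIndependent ℂ fun a => fderiv ℂ (H a) q}) :=
  (continuousOn_pi.mpr fun a => continuousOn_clm_apply.mpr fun v =>
    (hH a).continuousOn_fderiv_apply hΩ v).isOpen_inter_preimage hΩ
      (isOpen_setOfPred_linearIndependent (𝕜 := ℂ))

theorem IsPreconnected.subset_closure_setOf_linearIndependent_fderiv [Fintype ι]
    {H : ι → E → ℂ} (hpre : IsPreconnected Ω) (hΩ : IsOpen Ω)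
    (hH : ∀ a, DifferentiableOn ℂ (H a) Ω) {q₀ : E} (hq₀ : q₀ ∈ Ω)
    (hind : LinearIndependent ℂ fun a => fderiv ℂ (H a) q₀) :
    Ω ⊆ closure (Ω ∩ {q | LinearIndependent ℂ fun a => fderiv ℂ (H a) q}) := by
  classical
  obtain ⟨w, hw⟩ := hind.exists_det_apply_ne_zero
  have hdet : DifferentiableOnLines
      (fun q => (Matrix.of fun a b => fderiv ℂ (H a) q (w b)).det) Ω :=
    DifferentiableOnLines.det fun a b => (hH a).differentiableOnLines_fderiv_apply hΩ (w b)
  refine (hdet.subset_closure_inter_ne_zero hΩ hpre hq₀ hw).trans (closure_mono ?_)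
  rintro q ⟨hqΩ, hdetq⟩
  exact ⟨hqΩ, linearIndependent_of_det_apply_ne_zero w hdetq⟩

end

section

variable {m : ℕ}

open ContinuousLinearMap in
theorem fderiv_fibLin_zero {X : (Fin m → ℂ) → (Fin m → ℂ)} {z : Fin m → ℂ}
    (hX : DifferentiableAt ℂ X z) :
    fderiv ℂ (fibLin X) (z, 0) =
      (LinearMap.toContinuousLinearMap (dotProductEquiv ℂ (Fin m) (X z))).comp
        (snd ℂ (Fin m → ℂ) (Fin m → ℂ)) := by
  set q₀ : (Fin m → ℂ) × (Fin m → ℂ) := (z, 0)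
  have hj (j : Fin m) : HasFDerivAt (fun q : (Fin m → ℂ) × (Fin m → ℂ) => q.2 j * X q.1 j)
      (q₀.2 j • (proj j).comp ((fderiv ℂ X z).comp (fst ℂ _ _)) +
        X z j • (proj j).comp (snd ℂ _ _)) q₀ :=
    (((proj j).comp (snd ℂ _ _)).hasFDerivAt (x := q₀)).fun_mul
      ((hasFDerivAt_apply j (X z)).comp q₀ (hX.hasFDerivAt.comp q₀ hasFDerivAt_fst))
  rw [show fibLin X = fun q => ∑ j, q.2 j * X q.1 j from rfl,
    (HasFDerivAt.fun_sum fun j _ => hj j).fderiv]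
  refine ContinuousLinearMap.ext fun v => ?_
  simp [q₀, dotProduct]

theorem differentiableOn_fibLin {X : (Fin m → ℂ) → (Fin m → ℂ)} {U : Set (Fin m → ℂ)}
    (hX : DifferentiableOn ℂ X U) : DifferentiableOn ℂ (fibLin X) (Prod.fst ⁻¹' U) := by
  have hXfst (j : Fin m) :
      DifferentiableOn ℂ (fun q : (Fin m → ℂ) × (Fin m → ℂ) => X q.1 j) (Prod.fst ⁻¹' U) :=
    (differentiable_apply j).comp_differentiableOn
      (hX.comp differentiableOn_fst (mapsTo_preimage _ _))
  exact DifferentiableOn.fun_sum fun j _ =>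
    (by fun_prop : DifferentiableOn ℂ (fun q : (Fin m → ℂ) × (Fin m → ℂ) => q.2 j) _).fun_mul
      (hXfst j)

theorem linearIndependent_fderiv_fibLin_sumElim_comp_fst {k l : ℕ}
    {X : Fin k → (Fin m → ℂ) → (Fin m → ℂ)} {f : Fin l → (Fin m → ℂ) → ℂ} {z : Fin m → ℂ}
    (hX : ∀ i, DifferentiableAt ℂ (X i) z) (hf : ∀ j, DifferentiableAt ℂ (f j) z)
    (hXind : LinearIndependent ℂ fun i => X i z)
    (hfind : LinearIndependent ℂ fun j => fderiv ℂ (f j) z) :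
    LinearIndependent ℂ (Sum.elim (fun i => fderiv ℂ (fibLin (X i)) (z, 0))
      (fun j => fderiv ℂ (fun q : (Fin m → ℂ) × (Fin m → ℂ) => f j q.1) (z, 0))) := by
  let pairing := (dotProductEquiv ℂ (Fin m)).trans LinearMap.toContinuousLinearMap
  have hfst (j : Fin l) : fderiv ℂ (fun q : (Fin m → ℂ) × (Fin m → ℂ) => f j q.1) (z, 0) =
      (fderiv ℂ (f j) z).comp (ContinuousLinearMap.fst ℂ _ _) :=
    ((hf j).hasFDerivAt.comp (z, 0) hasFDerivAt_fst).fderiv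
  simp only [fderiv_fibLin_zero (hX _), hfst]
  exact (hXind.map' pairing.toLinearMap pairing.ker).sumElim_comp_snd_comp_fst hfind

end

theorem lifted_functions_independent_ae_general {m k l : ℕ}
    (U : Set (Fin m → ℂ)) (hU : IsOpen U) (hconn : IsConnected U)
    (X : Fin k → (Fin m → ℂ) → (Fin m → ℂ))
    (f : Fin l → (Fin m → ℂ) → ℂ)
    (hX : ∀ i, DifferentiableOn ℂ (X i) U)
    (hf : ∀ j, DifferentiableOn ℂ (f j) U)
    (x₀ : Fin m → ℂ) (hx₀ : x₀ ∈ U)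
    (hXind : LinearIndependent ℂ fun i => X i x₀)
    (hfind : LinearIndependent ℂ fun j => fderiv ℂ (f j) x₀)
    (H : Fin k ⊕ Fin l → (Fin m → ℂ) × (Fin m → ℂ) → ℂ)
    (hH1 : ∀ i, H (Sum.inl i) = fibLin (X i))
    (hH2 : ∀ j, H (Sum.inr j) = fun q => f j q.1) :
    IsOpen {q : (Fin m → ℂ) × (Fin m → ℂ) |
        q.1 ∈ U ∧ LinearIndependent ℂ fun a => fderiv ℂ (H a) q} ∧
    U ×ˢ (Set.univ : Set (Fin m → ℂ)) ⊆
      closure {q : (Fin m → ℂ) × (Fin m → ℂ) |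
        q.1 ∈ U ∧ LinearIndependent ℂ fun a => fderiv ℂ (H a) q} := by
  rw [prod_univ]
  set Ω : Set ((Fin m → ℂ) × (Fin m → ℂ)) := Prod.fst ⁻¹' U
  have hΩ : IsOpen Ω := hU.preimage continuous_fst
  have hpre : IsPreconnected Ω := by
    simpa only [prod_univ] using
      hconn.isPreconnected.prod (isPreconnected_univ (α := Fin m → ℂ))
  have hH : ∀ a, DifferentiableOn ℂ (H a) Ω := Sum.rec
    (fun i => hH1 i ▸ differentiableOn_fibLin (hX i))
    (fun j => hH2 j ▸ (hf j).comp differentiableOn_fst (mapsTo_preimage _ _))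
  have hind₀ : LinearIndependent ℂ fun a => fderiv ℂ (H a) (x₀, 0) := by
    convert linearIndependent_fderiv_fibLin_sumElim_comp_fst
      (fun i => (hX i).differentiableAt (hU.mem_nhds hx₀))
      (fun j => (hf j).differentiableAt (hU.mem_nhds hx₀)) hXind hfind using 1
    funext a
    rcases a with i | j <;> simp only [hH1, hH2, Sum.elim_inl, Sum.elim_inr]
  exact ⟨isOpen_inter_setOf_linearIndependent_fderiv hΩ hH,
    hpre.subset_closure_setOf_linearIndependent_fderiv hΩ hH hx₀ hind₀⟩

/-- Proposition 2.1, independence almost everywhere: if `U` is connected and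
the independence condition of Statement 4 holds at one point `x₀ ∈ U`, then the set of points
of `U × ℂ^m` where the differentials `dH₁,…,dH_m` are linearly independent is open and dense
in `U × ℂ^m`. -/
theorem lifted_functions_independent_ae {m k l : ℕ} (hkl : k + l = m)
    (U : Set (Fin m → ℂ)) (hU : IsOpen U) (hconn : IsConnected U)
    (X : Fin k → (Fin m → ℂ) → (Fin m → ℂ))
    (f : Fin l → (Fin m → ℂ) → ℂ)
    (hX : ∀ i, DifferentiableOn ℂ (X i) U)
    (hf : ∀ j, DifferentiableOn ℂ (f j) U)
    (x₀ : Fin m → ℂ) (hx₀ : x₀ ∈ U)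
    (hXind : LinearIndependent ℂ fun i => X i x₀)
    (hfind : LinearIndependent ℂ fun j => fderiv ℂ (f j) x₀)
    (H : Fin k ⊕ Fin l → (Fin m → ℂ) × (Fin m → ℂ) → ℂ)
    (hH1 : ∀ i, H (Sum.inl i) = fibLin (X i))
    (hH2 : ∀ j, H (Sum.inr j) = fun q => f j q.1) :
    IsOpen {q : (Fin m → ℂ) × (Fin m → ℂ) |
        q.1 ∈ U ∧ LinearIndependent ℂ fun a => fderiv ℂ (H a) q} ∧
    U ×ˢ (Set.univ : Set (Fin m → ℂ)) ⊆
      closure {q : (Fin m → ℂ) × (Fin m → ℂ) |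
        q.1 ∈ U ∧ LinearIndependent ℂ fun a => fderiv ℂ (H a) q} :=
  lifted_functions_independent_ae_general U hU hconn X f hX hf x₀ hx₀ hXind hfind H hH1 hH2
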